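/- arXiv:0808.2604 — 6 statements merged into one kernel-verified Lean document; each statement's English description precedes it below -/
import Mathlib

section
/- Let A be an algebra with invertible element x and element y satisfying y*x = q^2*x*y. Then for every natural number n, (x+y)^n = x^n · ∏_{μ=0}^{n-1} (1 + q^{2μ} x^{-1} y). -/
/-- If `x` is invertible and `y*x = q^2 • (x*y)`, then
`(x+y)^n = x^n · ∏_{μ=0}^{n-1} (1 + q^{2μ} x⁻¹ y)`, the product being the
left-to-right ordered product over `μ = 0, 1, …, n-1`. -/
theorem q_binomial_product_form {F A : Type*} [Field F] [Ring A] [Algebra F A]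
    (q : F) (x xinv y : A)
    (hx1 : x * xinv = 1) (hx2 : xinv * x = 1)
    (hxy : y * x = (q ^ 2) • (x * y)) (n : ℕ) :
    (x + y) ^ n =
      x ^ n * ((List.range n).map (fun μ => 1 + (q ^ (2 * μ)) • (xinv * y))).prod := by
  set z := xinv * y with hz
  have hxz : x * z = y := by rw [hz, ← mul_assoc, hx1, one_mul]
  have hzx : z * x = (q ^ 2) • (x * z) := by
    rw [hxz, hz, mul_assoc, hxy, mul_smul_comm, ← mul_assoc, hx2, one_mul, ← hxz]
  have hzxn : ∀ m : ℕ, z * x ^ m = ((q ^ 2) ^ m) • (x ^ m * z) := by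
    intro m
    induction m with
    | zero => simp
    | succ m ih =>
      rw [pow_succ, ← mul_assoc, ih, smul_mul_assoc, mul_assoc, hzx, mul_smul_comm,
        smul_smul, ← pow_succ, ← mul_assoc]
  have hcomm : ∀ m : ℕ,
      Commute (((List.range m).map (fun μ => 1 + (q ^ (2 * μ)) • z)).prod) z := by
    intro m
    apply Commute.list_prod_left
    intro a ha
    simp only [List.mem_map] at ha
    obtain ⟨μ, _, rfl⟩ := ha
    exact Commute.add_left (Commute.one_left z) ((Commute.refl z).smul_left _)
  induction n with
  | zero => simp
  | succ n ih =>
    rw [pow_succ', ih, ← mul_assoc]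
    have hsplit : (x + y) * x ^ n = x ^ (n + 1) * (1 + (q ^ (2 * n)) • z) := by
      rw [add_mul, ← hxz, mul_assoc, hzxn n]
      simp [mul_add, mul_smul_comm, pow_succ', mul_assoc, pow_mul]
    rw [hsplit, mul_assoc, List.range_succ, List.map_append, List.prod_append]
    congr 1
    rw [← ((Commute.one_right _).add_right ((hcomm n).smul_right (q ^ (2 * n)))).eq]
    simp
end

section
/- Let A be an integral domain (possibly noncommutative) and S a multiplicative subset generated by a family {s_i}_{i∈I}. If for every a ∈ A and every i ∈ I the sets S·a and A·s_i have nonempty intersection, then S satisfies the left Ore condition: for every a ∈ A and s ∈ S, S·a ∩ A·s ≠ ∅. -/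
/-- If `A` is a (possibly noncommutative) integral domain and `S` is the multiplicative
submonoid generated by `{s_i}`, and for every `a ∈ A` and every generator `s_i` one has
`S·a ∩ A·s_i ≠ ∅`, then `S` satisfies the left Ore condition:
for every `a ∈ A` and `s ∈ S`, `S·a ∩ A·s ≠ ∅`. -/
theorem left_ore_condition_of_generators {A : Type*} [Ring A] [NoZeroDivisors A]
    [Nontrivial A] {I : Type*} (s : I → A)
    (S : Submonoid A) (hS : S = Submonoid.closure (Set.range s))
    (h : ∀ (a : A) (i : I), ∃ t ∈ S, ∃ b : A, t * a = b * s i) :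
    ∀ (a : A), ∀ u ∈ S, ∃ t ∈ S, ∃ b : A, t * a = b * u := by
  subst hS
  intro a u hu
  induction hu using Submonoid.closure_induction generalizing a with
  | mem x hx =>
    obtain ⟨i, rfl⟩ := hx
    exact h a i
  | one => exact ⟨1, one_mem _, a, by simp⟩
  | mul x y hx hy ihx ihy =>
    obtain ⟨t1, ht1, b1, e1⟩ := ihy a
    obtain ⟨t2, ht2, b2, e2⟩ := ihx b1
    exact ⟨t2 * t1, mul_mem ht2 ht1, b2, by
      rw [mul_assoc, e1, ← mul_assoc, e2, mul_assoc]⟩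
end

section
/- Let A be an integral domain generated as an algebra over a field F by elements {a_j}_{j∈J}, and let S be the multiplicative subset generated by {s_i}_{i∈I}. Suppose that for all i ∈ I, j ∈ J, and n > 0 there exists N > 0 with s_i^N · a_j ∈ A·s_i^n. Then for all i ∈ I, a ∈ A, and n > 0 there exists N > 0 with s_i^N · a ∈ A·s_i^n; consequently S is a left Ore subset of A. -/
/-- Let `A` be an integral domain generated as an `F`-algebra by `{a_j}`, and let `S` be
the multiplicative submonoid generated by nonzero elements `{s_i}`. If for all `i, j` and
all `n > 0` there is `N > 0` with `s_i^N * a_j ∈ A·s_i^n`, then the same holds with `a_j`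
replaced by an arbitrary element of `A`, and consequently `S` is a left Ore subset of `A`. -/
theorem left_ore_of_generator_condition {F A : Type*} [Field F] [Ring A] [Algebra F A]
    [NoZeroDivisors A] [Nontrivial A] {I J : Type*}
    (a : J → A) (hgen : Algebra.adjoin F (Set.range a) = ⊤)
    (s : I → A) (hs : ∀ i, s i ≠ 0)
    (h : ∀ (i : I) (j : J) (n : ℕ), 0 < n →
      ∃ N : ℕ, 0 < N ∧ ∃ b : A, s i ^ N * a j = b * s i ^ n) :
    (∀ (i : I) (x : A) (n : ℕ), 0 < n →
      ∃ N : ℕ, 0 < N ∧ ∃ b : A, s i ^ N * x = b * s i ^ n) ∧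
    (∀ (x : A), ∀ u ∈ Submonoid.closure (Set.range s),
      ∃ t ∈ Submonoid.closure (Set.range s), ∃ b : A, t * x = b * u) := by
  have main : ∀ (i : I) (x : A) (n : ℕ), 0 < n →
      ∃ N : ℕ, 0 < N ∧ ∃ b : A, s i ^ N * x = b * s i ^ n := by
    intro i
    -- the set of good elements is a subalgebra
    let T : Subalgebra F A :=
      { carrier := {x : A | ∀ n : ℕ, 0 < n →
          ∃ N : ℕ, 0 < N ∧ ∃ b : A, s i ^ N * x = b * s i ^ n}
        mul_mem' := by
          rintro x y hx hy n hn
          obtain ⟨N₂, hN₂, b₂, hb₂⟩ := hy n hn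
          obtain ⟨N₁, hN₁, b₁, hb₁⟩ := hx N₂ hN₂
          exact ⟨N₁, hN₁, b₁ * b₂, by
            rw [← mul_assoc, hb₁, mul_assoc, hb₂, ← mul_assoc]⟩
        add_mem' := by
          rintro x y hx hy n hn
          obtain ⟨N₁, hN₁, b₁, hb₁⟩ := hx n hn
          obtain ⟨N₂, hN₂, b₂, hb₂⟩ := hy n hn
          refine ⟨N₁ + N₂, by positivity,
            s i ^ N₂ * b₁ + s i ^ N₁ * b₂, ?_⟩
          have h1 : s i ^ (N₁ + N₂) * x = (s i ^ N₂ * b₁) * s i ^ n := by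
            rw [add_comm N₁ N₂, pow_add, mul_assoc, hb₁, mul_assoc]
          have h2 : s i ^ (N₁ + N₂) * y = (s i ^ N₁ * b₂) * s i ^ n := by
            rw [pow_add, mul_assoc, hb₂, mul_assoc]
          rw [mul_add, h1, h2, add_mul]
        algebraMap_mem' := by
          intro r n hn
          exact ⟨n, hn, algebraMap F A r, (Algebra.commutes r _).symm⟩ }
    have hT : T = ⊤ := by
      rw [← top_le_iff, ← hgen]
      apply Algebra.adjoin_le
      rintro _ ⟨j, rfl⟩ n hn
      exact h i j n hn
    intro x n hn
    have hx : x ∈ T := hT ▸ Algebra.mem_top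
    exact hx n hn
  refine ⟨main, ?_⟩
  intro x u hu
  induction hu using Submonoid.closure_induction generalizing x with
  | mem u hu =>
    obtain ⟨i, rfl⟩ := hu
    obtain ⟨N, hN, b, hb⟩ := main i x 1 one_pos
    exact ⟨s i ^ N, pow_mem (Submonoid.subset_closure (Set.mem_range_self i)) N, b, by
      simpa using hb⟩
  | one => exact ⟨1, one_mem _, x, by simp⟩
  | mul u v hu hv ihu ihv =>
    obtain ⟨t₂, ht₂, b₂, hb₂⟩ := ihv x
    obtain ⟨t₁, ht₁, b₁, hb₁⟩ := ihu b₂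
    exact ⟨t₁ * t₂, mul_mem ht₁ ht₂, b₁, by
      rw [mul_assoc, hb₂, ← mul_assoc, hb₁, mul_assoc]⟩
end

section
/- Let A and B be associative algebras over a field F, each admitting a slowly increasing filtration. Then the tensor product algebra A ⊗_F B admits a slowly increasing filtration, namely F_k(A⊗B) = ∑_{i+j=k} F_i A ⊗ F_j B. -/
/-!
Since `dim (F_i A ⊗ F_j B) = dim F_i A · dim F_j B`, the dimensions of the tensor filtration are
bounded by the convolution of the two dimension sequences. A nonnegative sequence with
`limsup a_k^{1/k} ≤ 1` is bounded by `C r^k` for every `r > 1`; this property survives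
convolution and gives back `limsup ≤ 1`. As `F_k A ⊗ 1` and `1 ⊗ F_k B` lie in `F_k(A ⊗ B)`,
the dimensions of the factors inherit bounded `k`-th roots from those of the tensor filtration,
which is what makes the `limsup` hypotheses meaningful: an unbounded sequence has the junk value
`limsup = 0` in `ℝ`.
-/

open Filter Topology Finset
open scoped TensorProduct

def SubexponentialGrowth (a : ℕ → ℝ) : Prop :=
  ∀ r > 1, ∃ C, ∀ k, a k ≤ C * r ^ k

lemma natCast_add_one_le_mul_pow {s : ℝ} (hs : 1 < s) (k : ℕ) :
    (k + 1 : ℝ) ≤ s / (s - 1) * s ^ k := by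
  have hbern := one_add_mul_le_pow (show (-2 : ℝ) ≤ s - 1 by linarith) k
  have hpow : (1 : ℝ) ≤ s ^ k := one_le_pow₀ hs.le
  rw [add_sub_cancel] at hbern
  rw [div_mul_eq_mul_div, le_div_iff₀ (by linarith)]
  nlinarith [mul_nonneg (sub_nonneg.2 hpow) (sub_nonneg.2 hs.le)]

namespace SubexponentialGrowth

variable {a b : ℕ → ℝ}

lemma mono (hab : ∀ k, a k ≤ b k) (hb : SubexponentialGrowth b) : SubexponentialGrowth a :=
  fun r hr => (hb r hr).imp fun _ hC k => (hab k).trans (hC k)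

lemma of_limsup_root_le_one (h0 : ∀ k, 0 ≤ a k)
    (hbdd : IsBoundedUnder (· ≤ ·) atTop (fun k : ℕ => a k ^ ((1 : ℝ) / k)))
    (h : limsup (fun k : ℕ => a k ^ ((1 : ℝ) / k)) atTop ≤ 1) : SubexponentialGrowth a := by
  intro r hr
  obtain ⟨N, hN⟩ := eventually_atTop.1 (eventually_lt_of_limsup_lt (h.trans_lt hr) hbdd)
  have hsum0 : 0 ≤ ∑ j ∈ range (N + 1), a j := sum_nonneg fun j _ => h0 j
  refine ⟨1 + ∑ j ∈ range (N + 1), a j, fun k => ?_⟩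
  have hpow : 1 ≤ r ^ k := one_le_pow₀ hr.le
  rcases le_or_gt k N with hkN | hNk
  · have : a k ≤ ∑ j ∈ range (N + 1), a j :=
      single_le_sum (fun j _ => h0 j) (mem_range.2 (Nat.lt_succ_of_le hkN))
    nlinarith
  · have hk : k ≠ 0 := by omega
    have : a k ≤ r ^ k := by
      rw [← Real.rpow_inv_natCast_pow (h0 k) hk, ← one_div]
      exact pow_le_pow_left₀ (Real.rpow_nonneg (h0 k) _) (hN k hNk.le).le k
    nlinarith

lemma convolution (ha0 : ∀ k, 0 ≤ a k) (hb0 : ∀ k, 0 ≤ b k)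
    (ha : SubexponentialGrowth a) (hb : SubexponentialGrowth b) :
    SubexponentialGrowth (fun k => ∑ i ∈ range (k + 1), a i * b (k - i)) := by
  intro r hr
  -- split `r = s * s` and let one factor `s` absorb the `k + 1` terms of the sum
  set s := √r
  have hs : 1 < s := by rwa [Real.lt_sqrt zero_le_one, one_pow]
  have hss : s * s = r := Real.mul_self_sqrt (by linarith)
  obtain ⟨C, hC⟩ := ha s hs
  obtain ⟨D, hD⟩ := hb s hs
  have hC0 : 0 ≤ C := by simpa using (ha0 0).trans (hC 0)
  have hD0 : 0 ≤ D := by simpa using (hb0 0).trans (hD 0)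
  refine ⟨s / (s - 1) * (C * D), fun k => ?_⟩
  calc ∑ i ∈ range (k + 1), a i * b (k - i)
      ≤ ∑ i ∈ range (k + 1), C * s ^ i * (D * s ^ (k - i)) :=
        sum_le_sum fun i _ => mul_le_mul (hC i) (hD _) (hb0 _) (by positivity)
    _ = (k + 1) * (C * D * s ^ k) := by
        rw [sum_congr rfl fun i hi => by
          rw [mul_mul_mul_comm, ← pow_add,
            Nat.add_sub_cancel' (Nat.lt_succ_iff.1 (mem_range.1 hi))]]
        simp
    _ ≤ s / (s - 1) * s ^ k * (C * D * s ^ k) :=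
        mul_le_mul_of_nonneg_right (natCast_add_one_le_mul_pow hs k) (by positivity)
    _ = s / (s - 1) * (C * D) * r ^ k := by rw [← hss, mul_pow]; ring

lemma limsup_root_le_one (h0 : ∀ k, 0 ≤ a k) (ha : SubexponentialGrowth a) :
    limsup (fun k : ℕ => a k ^ ((1 : ℝ) / k)) atTop ≤ 1 := by
  refine le_of_forall_gt_imp_ge_of_dense fun r hr => ?_
  obtain ⟨C, hC⟩ := ha r hr
  set C' := max C 1
  have hC' : 0 < C' := lt_max_of_lt_right one_pos
  have hlim : Tendsto (fun k : ℕ => C' ^ ((1 : ℝ) / k) * r) atTop (𝓝 r) := by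
    simpa using (tendsto_const_nhds.rpow (tendsto_const_div_atTop_nhds_zero_nat 1)
      (Or.inl hC'.ne')).mul_const r
  refine (limsup_le_limsup ?_ (isCoboundedUnder_le_of_le atTop fun k => Real.rpow_nonneg (h0 k) _)
    hlim.isBoundedUnder_le).trans_eq hlim.limsup_eq
  filter_upwards [eventually_ne_atTop 0] with k hk
  calc a k ^ ((1 : ℝ) / k) ≤ (C' * r ^ k) ^ ((1 : ℝ) / k) :=
        Real.rpow_le_rpow (h0 k) ((hC k).trans (by gcongr; exact le_max_left _ _)) (by positivity)
    _ = C' ^ ((1 : ℝ) / k) * r := by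
        rw [Real.mul_rpow hC'.le (by positivity), one_div,
          Real.pow_rpow_inv_natCast (by linarith) hk]

end SubexponentialGrowth

section Module

variable {R M N : Type*} [CommSemiring R] [AddCommMonoid M] [Module R M]
  [AddCommMonoid N] [Module R N]

def tensorFiltration (FM : ℕ → Submodule R M) (FN : ℕ → Submodule R N) (k : ℕ) :
    Submodule R (M ⊗[R] N) :=
  ⨆ i ∈ range (k + 1),
    Submodule.span R (Set.image2 (fun m n => m ⊗ₜ[R] n) (FM i : Set M) (FN (k - i) : Set N))

lemma span_image2_tmul_eq_range_mapIncl (p : Submodule R M) (q : Submodule R N) :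
    Submodule.span R (Set.image2 (fun m n => m ⊗ₜ[R] n) (p : Set M) (q : Set N)) =
      LinearMap.range (TensorProduct.mapIncl p q) := by
  rw [TensorProduct.range_mapIncl, Submodule.map₂_eq_span_image2]
  rfl

variable (FM : ℕ → Submodule R M) (FN : ℕ → Submodule R N)

lemma tensorFiltration_eq_span (k : ℕ) :
    tensorFiltration FM FN k = Submodule.span R (⋃ i ∈ range (k + 1),
      Set.image2 (fun m n => m ⊗ₜ[R] n) (FM i : Set M) (FN (k - i) : Set N)) := by
  rw [tensorFiltration, Submodule.span_iUnion₂]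

lemma span_image2_tmul_le_tensorFiltration (i j : ℕ) :
    Submodule.span R (Set.image2 (fun m n => m ⊗ₜ[R] n) (FM i : Set M) (FN j : Set N)) ≤
      tensorFiltration FM FN (i + j) := by
  have hi : i ∈ range (i + j + 1) := mem_range.2 (by omega)
  have := le_iSup₂ (f := fun i' _ => Submodule.span R
    (Set.image2 (fun m n => m ⊗ₜ[R] n) (FM i' : Set M) (FN (i + j - i') : Set N))) i hi
  rwa [Nat.add_sub_cancel_left] at this

variable {FM FN}

lemma tmul_mem_tensorFiltration {i j : ℕ} {m : M} {n : N} (hm : m ∈ FM i) (hn : n ∈ FN j) :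
    m ⊗ₜ[R] n ∈ tensorFiltration FM FN (i + j) :=
  span_image2_tmul_le_tensorFiltration FM FN i j
    (Submodule.subset_span (Set.mem_image2_of_mem hm hn))

lemma tensorFiltration_mono (hFN : Monotone FN) : Monotone (tensorFiltration FM FN) := by
  refine monotone_nat_of_le_succ fun k => iSup₂_le fun i hi => ?_
  have hik : i ≤ k := Nat.lt_succ_iff.1 (mem_range.1 hi)
  calc _ ≤ Submodule.span R
        (Set.image2 (fun m n => m ⊗ₜ[R] n) (FM i : Set M) (FN (k + 1 - i) : Set N)) :=
        Submodule.span_mono (Set.image2_subset_left (hFN (by omega)))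
    _ ≤ tensorFiltration FM FN (i + (k + 1 - i)) := span_image2_tmul_le_tensorFiltration FM FN _ _
    _ = tensorFiltration FM FN (k + 1) := by rw [Nat.add_sub_cancel' (by omega)]

lemma exists_mem_tensorFiltration (hFM : ∀ m : M, ∃ k, m ∈ FM k)
    (hFN : ∀ n : N, ∃ k, n ∈ FN k) (hFN_mono : Monotone FN) (x : M ⊗[R] N) :
    ∃ k, x ∈ tensorFiltration FM FN k := by
  induction x using TensorProduct.induction_on with
  | zero => exact ⟨0, Submodule.zero_mem _⟩
  | tmul m n =>
    obtain ⟨i, hi⟩ := hFM m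
    obtain ⟨j, hj⟩ := hFN n
    exact ⟨i + j, tmul_mem_tensorFiltration hi hj⟩
  | add x y hx hy =>
    obtain ⟨k, hk⟩ := hx
    obtain ⟨l, hl⟩ := hy
    have hmono := tensorFiltration_mono (FM := FM) hFN_mono
    exact ⟨max k l, add_mem (hmono (le_max_left k l) hk) (hmono (le_max_right k l) hl)⟩

end Module

section Algebra

variable {R A B : Type*} [CommSemiring R] [Semiring A] [Algebra R A] [Semiring B] [Algebra R B]
  {FA : ℕ → Submodule R A} {FB : ℕ → Submodule R B}

lemma one_mem_tensorFiltration (hFA : (1 : A) ∈ FA 0) (hFB : (1 : B) ∈ FB 0) :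
    (1 : A ⊗[R] B) ∈ tensorFiltration FA FB 0 := by
  simpa only [Algebra.TensorProduct.one_def, zero_add] using tmul_mem_tensorFiltration hFA hFB

lemma mul_mem_tensorFiltration
    (hFA : ∀ k l (x y : A), x ∈ FA k → y ∈ FA l → x * y ∈ FA (k + l))
    (hFB : ∀ k l (x y : B), x ∈ FB k → y ∈ FB l → x * y ∈ FB (k + l))
    {k l : ℕ} {x y : A ⊗[R] B} (hx : x ∈ tensorFiltration FA FB k)
    (hy : y ∈ tensorFiltration FA FB l) : x * y ∈ tensorFiltration FA FB (k + l) := by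
  suffices tensorFiltration FA FB k * tensorFiltration FA FB l ≤
      tensorFiltration FA FB (k + l) from this (Submodule.mul_mem_mul hx hy)
  rw [tensorFiltration_eq_span FA FB k, tensorFiltration_eq_span FA FB l,
    Submodule.span_mul_span, Submodule.span_le]
  rintro _ ⟨_, hu, _, hv, rfl⟩
  simp only [Set.mem_iUnion, mem_range] at hu hv
  obtain ⟨i, hi, a, ha, b, hb, rfl⟩ := hu
  obtain ⟨j, hj, a', ha', b', hb', rfl⟩ := hv
  have := tmul_mem_tensorFiltration (hFA _ _ _ _ ha ha') (hFB _ _ _ _ hb hb')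
  rw [show i + j + (k - i + (l - j)) = k + l by omega] at this
  simpa only [Algebra.TensorProduct.tmul_mul_tmul, SetLike.mem_coe] using this

end Algebra

section Field

variable {K M N : Type*} [Field K] [AddCommGroup M] [Module K M] [AddCommGroup N] [Module K N]

lemma Submodule.finrank_finset_sup_le_sum {ι : Type*} (s : Finset ι) (T : ι → Submodule K M)
    [∀ i, FiniteDimensional K (T i)] :
    Module.finrank K (s.sup T : Submodule K M) ≤ ∑ i ∈ s, Module.finrank K (T i) := by
  classical
  induction s using cons_induction with
  | empty => simp
  | cons i s hi ih =>
    rw [sup_cons, sum_cons]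
    exact (Submodule.finrank_add_le_finrank_add_finrank _ _).trans (Nat.add_le_add_left ih _)

instance finiteDimensional_span_image2_tmul (p : Submodule K M) (q : Submodule K N)
    [FiniteDimensional K p] [FiniteDimensional K q] :
    FiniteDimensional K
      (Submodule.span K (Set.image2 (fun m n => m ⊗ₜ[K] n) (p : Set M) (q : Set N))) := by
  rw [span_image2_tmul_eq_range_mapIncl]
  infer_instance

lemma finrank_span_image2_tmul_le (p : Submodule K M) (q : Submodule K N)
    [FiniteDimensional K p] [FiniteDimensional K q] :
    Module.finrank K
        (Submodule.span K (Set.image2 (fun m n => m ⊗ₜ[K] n) (p : Set M) (q : Set N))) ≤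
      Module.finrank K p * Module.finrank K q := by
  rw [span_image2_tmul_eq_range_mapIncl, ← Module.finrank_tensorProduct]
  exact LinearMap.finrank_range_le _

variable {FM : ℕ → Submodule K M} {FN : ℕ → Submodule K N}
  [∀ i, FiniteDimensional K (FM i)] [∀ j, FiniteDimensional K (FN j)]

instance finiteDimensional_tensorFiltration (k : ℕ) :
    FiniteDimensional K (tensorFiltration FM FN k) := by
  rw [tensorFiltration, ← Finset.sup_eq_iSup]
  infer_instance

lemma finrank_tensorFiltration_le (k : ℕ) :
    Module.finrank K (tensorFiltration FM FN k) ≤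
      ∑ i ∈ range (k + 1), Module.finrank K (FM i) * Module.finrank K (FN (k - i)) := by
  rw [tensorFiltration, ← Finset.sup_eq_iSup]
  exact (Submodule.finrank_finset_sup_le_sum _ _).trans
    (sum_le_sum fun i _ => finrank_span_image2_tmul_le _ _)

end Field

section FieldAlgebra

variable {K A B : Type*} [Field K] [Ring A] [Algebra K A] [Ring B] [Algebra K B]
  {FA : ℕ → Submodule K A} {FB : ℕ → Submodule K B}
  [∀ i, FiniteDimensional K (FA i)] [∀ j, FiniteDimensional K (FB j)]

lemma finrank_le_finrank_tensorFiltration_left [Nontrivial B] (hFB : (1 : B) ∈ FB 0) (k : ℕ) :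
    Module.finrank K (FA k) ≤ Module.finrank K (tensorFiltration FA FB k) :=
  calc Module.finrank K (FA k)
      = Module.finrank K ((FA k).map (Algebra.TensorProduct.includeLeft (S := K)).toLinearMap) :=
        (Submodule.equivMapOfInjective _
          (Algebra.TensorProduct.includeLeft_injective (S := K) (algebraMap K B).injective)
          _).finrank_eq
    _ ≤ _ := Submodule.finrank_mono <| Submodule.map_le_iff_le_comap.2 fun _ ha =>
        Submodule.mem_comap.2 (tmul_mem_tensorFiltration ha hFB)

lemma finrank_le_finrank_tensorFiltration_right [Nontrivial A] (hFA : (1 : A) ∈ FA 0) (k : ℕ) :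
    Module.finrank K (FB k) ≤ Module.finrank K (tensorFiltration FA FB k) :=
  calc Module.finrank K (FB k)
      = Module.finrank K ((FB k).map (Algebra.TensorProduct.includeRight).toLinearMap) :=
        (Submodule.equivMapOfInjective _
          (Algebra.TensorProduct.includeRight_injective (algebraMap K A).injective) _).finrank_eq
    _ ≤ _ := Submodule.finrank_mono <| Submodule.map_le_iff_le_comap.2 fun _ hb =>
        Submodule.mem_comap.2 (by
          simpa only [zero_add, AlgHom.toLinearMap_apply, Algebra.TensorProduct.includeRight_apply]
            using tmul_mem_tensorFiltration hFA hb)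

lemma limsup_root_finrank_tensorFiltration_le_one
    (hFA1 : (1 : A) ∈ FA 0) (hFB1 : (1 : B) ∈ FB 0)
    (hFA : limsup (fun k : ℕ => (Module.finrank K (FA k) : ℝ) ^ ((1 : ℝ) / k)) atTop ≤ 1)
    (hFB : limsup (fun k : ℕ => (Module.finrank K (FB k) : ℝ) ^ ((1 : ℝ) / k)) atTop ≤ 1) :
    limsup (fun k : ℕ => (Module.finrank K (tensorFiltration FA FB k) : ℝ) ^ ((1 : ℝ) / k))
      atTop ≤ 1 := by
  by_cases hbdd : IsBoundedUnder (· ≤ ·) atTop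
    (fun k : ℕ => (Module.finrank K (tensorFiltration FA FB k) : ℝ) ^ ((1 : ℝ) / k))
  swap
  · rw [Real.limsup_of_not_isBoundedUnder hbdd]
    exact zero_le_one
  refine SubexponentialGrowth.limsup_root_le_one (fun k => Nat.cast_nonneg _) ?_
  obtain hAB | hAB := subsingleton_or_nontrivial (A ⊗[K] B)
  · exact fun _ _ => ⟨0, fun k => by simp [Module.finrank_zero_of_subsingleton]⟩
  have : Nontrivial A := nontrivial_of_ne (1 : A) 0 fun h => by
    simpa [Algebra.TensorProduct.one_def, h] using one_ne_zero (α := A ⊗[K] B)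
  have : Nontrivial B := nontrivial_of_ne (1 : B) 0 fun h => by
    simpa [Algebra.TensorProduct.one_def, h] using one_ne_zero (α := A ⊗[K] B)
  have hbdd_of_le : ∀ d : ℕ → ℕ,
      (∀ k, d k ≤ Module.finrank K (tensorFiltration FA FB k)) →
      IsBoundedUnder (· ≤ ·) atTop (fun k : ℕ => (d k : ℝ) ^ ((1 : ℝ) / k)) := fun d hd =>
    hbdd.mono_le <| Eventually.of_forall fun k =>
      Real.rpow_le_rpow (Nat.cast_nonneg _) (Nat.cast_le.2 (hd k)) (by positivity)
  have hA := SubexponentialGrowth.of_limsup_root_le_one (fun k => Nat.cast_nonneg _)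
    (hbdd_of_le _ (finrank_le_finrank_tensorFiltration_left hFB1)) hFA
  have hB := SubexponentialGrowth.of_limsup_root_le_one (fun k => Nat.cast_nonneg _)
    (hbdd_of_le _ (finrank_le_finrank_tensorFiltration_right hFA1)) hFB
  refine (hA.convolution (fun k => Nat.cast_nonneg _) (fun k => Nat.cast_nonneg _) hB).mono
    fun k => ?_
  exact_mod_cast finrank_tensorFiltration_le k

end FieldAlgebra

theorem tensor_product_tempered_general {F A B : Type*} [Field F]
    [Ring A] [Algebra F A] [Ring B] [Algebra F B]
    (FA : ℕ → Submodule F A) (FB : ℕ → Submodule F B)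
    (hAexh : ∀ x : A, ∃ k, x ∈ FA k)
    (hAone : (1 : A) ∈ FA 0)
    (hAmul : ∀ k l (x y : A), x ∈ FA k → y ∈ FA l → x * y ∈ FA (k + l))
    (hAfin : ∀ k, FiniteDimensional F (FA k))
    (hAslow : Filter.limsup
      (fun k : ℕ => ((Module.finrank F (FA k) : ℝ)) ^ ((1 : ℝ) / (k : ℝ)))
      Filter.atTop ≤ 1)
    (hBmono : Monotone FB) (hBexh : ∀ x : B, ∃ k, x ∈ FB k)
    (hBone : (1 : B) ∈ FB 0)
    (hBmul : ∀ k l (x y : B), x ∈ FB k → y ∈ FB l → x * y ∈ FB (k + l))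
    (hBfin : ∀ k, FiniteDimensional F (FB k))
    (hBslow : Filter.limsup
      (fun k : ℕ => ((Module.finrank F (FB k) : ℝ)) ^ ((1 : ℝ) / (k : ℝ)))
      Filter.atTop ≤ 1)
    (G : ℕ → Submodule F (A ⊗[F] B))
    (hG : ∀ k, G k = ⨆ i ∈ Finset.range (k + 1),
      Submodule.span F
        (Set.image2 (fun a b => a ⊗ₜ[F] b) (FA i : Set A) (FB (k - i) : Set B))) :
    Monotone G ∧ (∀ x : A ⊗[F] B, ∃ k, x ∈ G k) ∧ (1 : A ⊗[F] B) ∈ G 0 ∧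
    (∀ k l (x y : A ⊗[F] B), x ∈ G k → y ∈ G l → x * y ∈ G (k + l)) ∧
    (∀ k, FiniteDimensional F (G k)) ∧
    Filter.limsup
      (fun k : ℕ => ((Module.finrank F (G k) : ℝ)) ^ ((1 : ℝ) / (k : ℝ)))
      Filter.atTop ≤ 1 := by
  obtain rfl : G = tensorFiltration FA FB := funext hG
  exact ⟨tensorFiltration_mono hBmono, exists_mem_tensorFiltration hAexh hBexh hBmono,
    one_mem_tensorFiltration hAone hBone, fun _ _ _ _ => mul_mem_tensorFiltration hAmul hBmul,
    finiteDimensional_tensorFiltration, limsup_root_finrank_tensorFiltration_le_one hAone hBone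
      hAslow hBslow⟩

/-- If `A` and `B` are `F`-algebras each with a slowly increasing filtration, then the
tensor product algebra `A ⊗[F] B` admits a slowly increasing filtration, namely
`F_k(A⊗B) = ∑_{i+j=k} F_i A ⊗ F_j B`. -/
theorem tensor_product_tempered {F A B : Type*} [Field F]
    [Ring A] [Algebra F A] [Ring B] [Algebra F B]
    (FA : ℕ → Submodule F A) (FB : ℕ → Submodule F B)
    (hAmono : Monotone FA) (hAexh : ∀ x : A, ∃ k, x ∈ FA k)
    (hAone : (1 : A) ∈ FA 0)
    (hAmul : ∀ k l (x y : A), x ∈ FA k → y ∈ FA l → x * y ∈ FA (k + l))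
    (hAfin : ∀ k, FiniteDimensional F (FA k))
    (hAslow : Filter.limsup
      (fun k : ℕ => ((Module.finrank F (FA k) : ℝ)) ^ ((1 : ℝ) / (k : ℝ)))
      Filter.atTop ≤ 1)
    (hBmono : Monotone FB) (hBexh : ∀ x : B, ∃ k, x ∈ FB k)
    (hBone : (1 : B) ∈ FB 0)
    (hBmul : ∀ k l (x y : B), x ∈ FB k → y ∈ FB l → x * y ∈ FB (k + l))
    (hBfin : ∀ k, FiniteDimensional F (FB k))
    (hBslow : Filter.limsup
      (fun k : ℕ => ((Module.finrank F (FB k) : ℝ)) ^ ((1 : ℝ) / (k : ℝ)))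
      Filter.atTop ≤ 1)
    (G : ℕ → Submodule F (A ⊗[F] B))
    (hG : ∀ k, G k = ⨆ i ∈ Finset.range (k + 1),
      Submodule.span F
        (Set.image2 (fun a b => a ⊗ₜ[F] b) (FA i : Set A) (FB (k - i) : Set B))) :
    Monotone G ∧ (∀ x : A ⊗[F] B, ∃ k, x ∈ G k) ∧ (1 : A ⊗[F] B) ∈ G 0 ∧
    (∀ k l (x y : A ⊗[F] B), x ∈ G k → y ∈ G l → x * y ∈ G (k + l)) ∧
    (∀ k, FiniteDimensional F (G k)) ∧
    Filter.limsup
      (fun k : ℕ => ((Module.finrank F (G k) : ℝ)) ^ ((1 : ℝ) / (k : ℝ)))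
      Filter.atTop ≤ 1 :=
  tensor_product_tempered_general FA FB hAexh hAone hAmul hAfin hAslow hBmono hBexh hBone hBmul
    hBfin hBslow G hG
end

section
/- Verma relation for type A_2: let f_i, f_j be elements of a ℚ(q)-algebra satisfying the q-Serre relations f_i^2 f_j − (q+q^{-1}) f_i f_j f_i + f_j f_i^2 = 0 and f_j^2 f_i − (q+q^{-1}) f_j f_i f_j + f_i f_j^2 = 0. Then for all natural numbers k, l: f_i^l f_j^{k+l} f_i^k = f_j^k f_i^{k+l} f_j^l. -/
/-!
Put `z = x y - q y x`. When `q q⁻¹ = 1` the two q-Serre relations say exactly that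
`x z = q⁻¹ z x` and `z y = q⁻¹ y z`. Together with `x y = z + q y x` these put every product
`x^m y^n` into the normal form `∑ₜ c(m,n,t) y^(n-t) z^t x^(m-t)`, with coefficients given by a
recursion that does not depend on the algebra. The relations are invariant under the
anti-automorphism exchanging `x` and `y` and fixing `z`, so also
`x^n y^m = ∑ₜ c(m,n,t) y^(m-t) z^t x^(n-t)`. Multiplying the first expansion (for `m = l`,
`n = k + l`) by `x^k` on the right and the second by `y^k` on the left gives the same sum
`∑ₜ c(l,k+l,t) y^(k+l-t) z^t x^(k+l-t)` for both sides of the Verma relation.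

For `q = 0` (where `q⁻¹ = 0`) the relations say that `x²` anticommutes with `y` and `y²` with
`x`; moving an even power across then produces the same sign on both sides.
-/

open Finset MulOpposite

namespace VermaRelation

section Algebra

variable {R A : Type*} [CommRing R] [Ring A] [Algebra R A]

/-- For `v = q⁻¹` this is the quantum integer `[p]`. -/
def qInt (q v : R) (p : ℕ) : R := ∑ i ∈ range p, q ^ i * v ^ (p - 1 - i)

@[simp] lemma qInt_zero (q v : R) : qInt q v 0 = 0 := rfl

lemma qInt_succ (q v : R) (p : ℕ) : qInt q v (p + 1) = q ^ p + v * qInt q v p := by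
  simpa [qInt] using geom_sum₂_succ_eq q v (n := p)

/-- The coefficient of `y^(n-t) z^t x^(m-t)` in `x^m y^n`; the recursion comes from
`mul_monomial`. -/
def normalCoeff (q v : R) : ℕ → ℕ → ℕ → R
  | 0, _, 0 => 1
  | 0, _, _ + 1 => 0
  | m + 1, n, 0 => q ^ n * normalCoeff q v m n 0
  | m + 1, n, t + 1 =>
      q ^ (n - (t + 1)) * v ^ (t + 1) * normalCoeff q v m n (t + 1)
        + qInt q v (n - t) * normalCoeff q v m n t

lemma normalCoeff_eq_zero_of_lt (q v : R) {m : ℕ} (n : ℕ) {t : ℕ} (h : m < t) :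
    normalCoeff q v m n t = 0 := by
  induction m generalizing t with
  | zero => obtain ⟨t, rfl⟩ := Nat.exists_eq_add_of_lt h; rfl
  | succ m ih =>
    obtain ⟨t, rfl⟩ := Nat.exists_eq_add_of_lt (Nat.zero_lt_of_lt h)
    rw [normalCoeff, ih (by omega), ih (by omega), mul_zero, mul_zero, add_zero]

section Heisenberg

variable {q v : R} {x y z : A}

lemma mul_pow_of_mul_eq_smul (hxz : x * z = v • (z * x)) (t : ℕ) :
    x * z ^ t = v ^ t • (z ^ t * x) := by
  have : SemiconjBy x z (v • z) := by rw [SemiconjBy, hxz, smul_mul_assoc]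
  rw [(this.pow_right t).eq, smul_pow, smul_mul_assoc]

lemma mul_pow_eq_add (hxy : x * y = z + q • (y * x)) (hzy : z * y = v • (y * z)) (p : ℕ) :
    x * y ^ p = q ^ p • (y ^ p * x) + qInt q v p • (y ^ (p - 1) * z) := by
  induction p with
  | zero => simp
  | succ p ih =>
    rcases p with _ | p
    · simp [hxy, qInt_succ, add_comm]
    · calc x * y ^ (p + 2) = (x * y ^ (p + 1)) * y := by rw [pow_succ _ (p + 1), mul_assoc]
        _ = q ^ (p + 1) • (y ^ (p + 1) * (x * y)) + qInt q v (p + 1) • (y ^ p * (z * y)) := by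
          rw [ih]; simp only [add_mul, smul_mul_assoc, mul_assoc, Nat.add_sub_cancel]
        _ = _ := by
          rw [hxy, hzy, qInt_succ _ _ (p + 1)]
          simp only [mul_add, mul_smul_comm, ← mul_assoc, ← pow_succ, smul_add, smul_smul,
            add_smul, Nat.add_sub_cancel]
          module

lemma mul_monomial (hxy : x * y = z + q • (y * x)) (hxz : x * z = v • (z * x))
    (hzy : z * y = v • (y * z)) (p t r : ℕ) :
    x * (y ^ p * z ^ t * x ^ r)
      = (q ^ p * v ^ t) • (y ^ p * z ^ t * x ^ (r + 1))
        + qInt q v p • (y ^ (p - 1) * z ^ (t + 1) * x ^ r) := by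
  calc x * (y ^ p * z ^ t * x ^ r) = (x * y ^ p) * z ^ t * x ^ r := by simp only [mul_assoc]
    _ = q ^ p • (y ^ p * (x * z ^ t) * x ^ r)
          + qInt q v p • (y ^ (p - 1) * (z * z ^ t) * x ^ r) := by
      rw [mul_pow_eq_add hxy hzy]; simp only [add_mul, smul_mul_assoc, mul_assoc]
    _ = _ := by
      rw [mul_pow_of_mul_eq_smul hxz, ← pow_succ', pow_succ' x r]
      simp only [mul_smul_comm, smul_mul_assoc, smul_smul, mul_assoc]

lemma pow_mul_pow_eq_sum (hxy : x * y = z + q • (y * x)) (hxz : x * z = v • (z * x))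
    (hzy : z * y = v • (y * z)) (m n : ℕ) :
    x ^ m * y ^ n = ∑ t ∈ range (m + 1),
      normalCoeff q v m n t • (y ^ (n - t) * z ^ t * x ^ (m - t)) := by
  induction m with
  | zero => simp [normalCoeff]
  | succ m ih =>
    set c := normalCoeff q v m n
    set N : ℕ → A := fun t => y ^ (n - t) * z ^ t * x ^ (m + 1 - t)
    have hstep : ∀ t ∈ range (m + 1), x * (c t • (y ^ (n - t) * z ^ t * x ^ (m - t)))
        = (q ^ (n - t) * v ^ t * c t) • N t + (qInt q v (n - t) * c t) • N (t + 1) := by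
      intro t ht
      have : m - t + 1 = m + 1 - t := by have := mem_range.mp ht; omega
      simp only [N, mul_smul_comm, mul_monomial hxy hxz hzy, smul_add, smul_smul, this,
        Nat.sub_sub, Nat.add_sub_add_right, mul_comm (c t)]
    have htop : (q ^ (n - (m + 1)) * v ^ (m + 1) * c (m + 1)) • N (m + 1) = 0 := by
      rw [show c (m + 1) = 0 from normalCoeff_eq_zero_of_lt q v n (Nat.lt_succ_self m), mul_zero,
        zero_smul]
    calc x ^ (m + 1) * y ^ n
          = ∑ t ∈ range (m + 1), x * (c t • (y ^ (n - t) * z ^ t * x ^ (m - t))) := by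
          rw [pow_succ', mul_assoc, ih, mul_sum]
      _ = ∑ t ∈ range (m + 2), (q ^ (n - t) * v ^ t * c t) • N t
            + ∑ t ∈ range (m + 1), (qInt q v (n - t) * c t) • N (t + 1) := by
          rw [sum_congr rfl hstep, sum_add_distrib, sum_range_succ _ (m + 1), htop, add_zero]
      _ = _ := by
          rw [sum_range_succ' _ (m + 1), sum_range_succ' _ (m + 1)]
          simp only [normalCoeff, add_smul, sum_add_distrib, Nat.sub_zero, pow_zero, mul_one, c, N]
          abel

/-- `pow_mul_pow_eq_sum` in `Aᵐᵒᵖ`, applied to `op y`, `op x`, `op z`. -/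
lemma pow_mul_pow_eq_sum_swap (hxy : x * y = z + q • (y * x)) (hxz : x * z = v • (z * x))
    (hzy : z * y = v • (y * z)) (m n : ℕ) :
    x ^ n * y ^ m = ∑ t ∈ range (m + 1),
      normalCoeff q v m n t • (y ^ (m - t) * z ^ t * x ^ (n - t)) := by
  apply op_injective
  have hxy' : op y * op x = op z + q • (op x * op y) := by
    rw [← op_mul, hxy, op_add, op_smul, op_mul]
  have hxz' : op y * op z = v • (op z * op y) := by
    rw [← op_mul, hzy, op_smul, op_mul]
  have hzy' : op z * op x = v • (op x * op z) := by
    rw [← op_mul, hxz, op_smul, op_mul]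
  simp only [op_mul, op_pow, op_sum, op_smul, pow_mul_pow_eq_sum hxy' hxz' hzy' m n, mul_assoc]

theorem verma_relation_of_heisenberg (hxy : x * y = z + q • (y * x))
    (hxz : x * z = v • (z * x)) (hzy : z * y = v • (y * z)) (k l : ℕ) :
    x ^ l * y ^ (k + l) * x ^ k = y ^ k * x ^ (k + l) * y ^ l := by
  rw [pow_mul_pow_eq_sum hxy hxz hzy, mul_assoc, pow_mul_pow_eq_sum_swap hxy hxz hzy, sum_mul,
    mul_sum]
  refine sum_congr rfl fun t hmem => ?_
  have ht : t ≤ l := Nat.lt_succ_iff.mp (mem_range.mp hmem)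
  rw [smul_mul_assoc, mul_smul_comm, mul_assoc, ← pow_add, ← mul_assoc, ← mul_assoc, ← pow_add,
    show l - t + k = k + l - t by omega, show k + (l - t) = k + l - t by omega]

end Heisenberg

section Serre

variable {q v : R} {x y : A}

lemma mul_qComm_of_serre (hqv : q * v = 1)
    (h : x ^ 2 * y - (q + v) • (x * y * x) + y * x ^ 2 = 0) :
    x * (x * y - q • (y * x)) = v • ((x * y - q • (y * x)) * x) := by
  have hvq : v * q - 1 = 0 := by rw [mul_comm, hqv, sub_self]
  rw [← sub_eq_zero]
  simp only [pow_two, mul_sub, sub_mul, mul_smul_comm, smul_mul_assoc, mul_assoc] at h ⊢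
  linear_combination (norm := module) h + hvq • (y * (x * x))

lemma qComm_mul_of_serre (hqv : q * v = 1)
    (h : y ^ 2 * x - (q + v) • (y * x * y) + x * y ^ 2 = 0) :
    (x * y - q • (y * x)) * y = v • (y * (x * y - q • (y * x))) := by
  have hvq : v * q - 1 = 0 := by rw [mul_comm, hqv, sub_self]
  rw [← sub_eq_zero]
  simp only [pow_two, mul_sub, sub_mul, mul_smul_comm, smul_mul_assoc, mul_assoc] at h ⊢
  linear_combination (norm := module) h + hvq • (y * (y * x))

theorem verma_relation_of_serre (hqv : q * v = 1)
    (h1 : x ^ 2 * y - (q + v) • (x * y * x) + y * x ^ 2 = 0)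
    (h2 : y ^ 2 * x - (q + v) • (y * x * y) + x * y ^ 2 = 0) (k l : ℕ) :
    x ^ l * y ^ (k + l) * x ^ k = y ^ k * x ^ (k + l) * y ^ l :=
  verma_relation_of_heisenberg (sub_add_cancel _ _).symm (mul_qComm_of_serre hqv h1)
    (qComm_mul_of_serre hqv h2) k l

end Serre

end Algebra

section Anticommuting

variable {A : Type*} [Ring A]

lemma pow_mul_pow_of_anticommute {u w : A} (h : u * w + w * u = 0) (c m : ℕ) :
    u ^ c * w ^ m = (-1 : ℤ) ^ (c * m) • (w ^ m * u ^ c) := by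
  have hu : SemiconjBy u (w ^ m) ((-1 : ℤ) ^ m • w ^ m) := by
    have : SemiconjBy u w ((-1 : ℤ) • w) := by
      rw [SemiconjBy, neg_one_zsmul, neg_mul, eq_neg_iff_add_eq_zero, h]
    simpa only [smul_pow] using this.pow_right m
  induction c with
  | zero => simp
  | succ c ih =>
    rw [pow_succ, mul_assoc, hu.eq, smul_mul_assoc, mul_smul_comm, ← mul_assoc, ih,
      smul_mul_assoc, smul_smul, mul_assoc, ← pow_succ, ← pow_add, add_one_mul, add_comm m]

theorem verma_relation_of_anticommute {x y : A} (h1 : x ^ 2 * y + y * x ^ 2 = 0)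
    (h2 : y ^ 2 * x + x * y ^ 2 = 0) (k l : ℕ) :
    x ^ l * y ^ (k + l) * x ^ k = y ^ k * x ^ (k + l) * y ^ l := by
  have h1' : y * x ^ 2 + x ^ 2 * y = 0 := by rwa [add_comm]
  have h2' : x * y ^ 2 + y ^ 2 * x = 0 := by rwa [add_comm]
  rcases Nat.even_or_odd' k with ⟨c, rfl | rfl⟩
  · rw [mul_assoc, pow_mul x 2 c, pow_mul_pow_of_anticommute h1', mul_smul_comm, ← mul_assoc,
      ← pow_mul, ← pow_add, pow_mul y 2 c, pow_mul_pow_of_anticommute h2, smul_mul_assoc,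
      mul_assoc, ← pow_mul, ← pow_add, mul_comm c, add_comm l]
  rcases Nat.even_or_odd' l with ⟨d, rfl | rfl⟩
  · rw [pow_mul x 2 d, pow_mul_pow_of_anticommute h1, smul_mul_assoc, mul_assoc, ← pow_mul,
      ← pow_add, mul_assoc, pow_mul y 2 d, pow_mul_pow_of_anticommute h2', mul_smul_comm,
      ← mul_assoc, ← pow_mul, ← pow_add, mul_comm d, add_comm (2 * d)]
  · obtain ⟨e, he⟩ : ∃ e, 2 * c + 1 + (2 * d + 1) = 2 * e := ⟨c + d + 1, by ring⟩
    rw [he, mul_assoc, pow_mul y 2 e, pow_mul_pow_of_anticommute h2, mul_smul_comm, ← mul_assoc,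
      ← pow_mul, ← pow_add, pow_mul x 2 e, pow_mul_pow_of_anticommute h1', smul_mul_assoc,
      mul_assoc, ← pow_mul, ← pow_add, mul_comm e, add_comm (2 * d + 1), he]

end Anticommuting

end VermaRelation

/-- Verma relation for type A₂: if `f_i, f_j` satisfy the simply-laced q-Serre
relations, then `f_i^l f_j^{k+l} f_i^k = f_j^k f_i^{k+l} f_j^l` for all `k, l`. -/
theorem verma_relation_A2 {F A : Type*} [Field F] [Ring A] [Algebra F A]
    (q : F) (fi fj : A)
    (h1 : fi ^ 2 * fj - (q + q⁻¹) • (fi * fj * fi) + fj * fi ^ 2 = 0)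
    (h2 : fj ^ 2 * fi - (q + q⁻¹) • (fj * fi * fj) + fi * fj ^ 2 = 0)
    (k l : ℕ) :
    fi ^ l * fj ^ (k + l) * fi ^ k = fj ^ k * fi ^ (k + l) * fj ^ l := by
  by_cases hq : q = 0
  · subst hq
    simp only [inv_zero, add_zero, zero_smul, sub_zero] at h1 h2
    exact VermaRelation.verma_relation_of_anticommute h1 h2 k l
  · exact VermaRelation.verma_relation_of_serre (mul_inv_cancel₀ hq) h1 h2 k l
end

section
/- Evaluation of noncommutative rational functions is well-defined: let A be an Ore domain over a field F, let 𝒜 = A[x_1,…,x_M] (central polynomial variables), and let K, 𝒦 be their respective fields of fractions. If f ∈ 𝒦 has two representations f = g^{-1}h = g'^{-1}h' with g, h, g', h' ∈ 𝒜 and g(c) ≠ 0, g'(c) ≠ 0 for some c ∈ F^M, then g(c)^{-1}h(c) = g'(c)^{-1}h'(c) in K. -/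
/-!
Clearing denominators with the Ore condition gives `u g = u' g'` and `u h = u' h'` in `𝒜`, but
`u(c)` may vanish, so one cannot simply evaluate. Instead restrict to the line through `c`:
`p ↦ p(c + t (x - c))` is an injective ring map `𝒜 → 𝒜[t]` whose constant term is `p(c)`.
Since `g(c), g'(c) ≠ 0`, the images of `u` and `u'` vanish to the same order in `t`, and comparing
the coefficients of that order gives nonzero `w` and some `w'` in `𝒜` with `w g(c) = w' g'(c)` and
`w h(c) = w' h'(c)`. A nonzero coefficient of `w` turns this into the same relation inside `A`,
which in `K` says `g(c)⁻¹ h(c) = g'(c)⁻¹ h'(c)`.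
-/

/-- Evaluation of a noncommutative polynomial `p ∈ A[x_1,…,x_M]` (modelled as
`AddMonoidAlgebra A (Fin M →₀ ℕ)`) at a point `c ∈ F^M`. -/
noncomputable def evalAt {F A : Type*} [Field F] [Ring A] [Algebra F A] {M : ℕ}
    (c : Fin M → F) (p : AddMonoidAlgebra A (Fin M →₀ ℕ)) : A :=
  Finsupp.sum p.coeff fun m r => (∏ μ : Fin M, c μ ^ m μ) • r

/-- `a⁻¹ * b = a'⁻¹ * b'` with the denominators cleared on the left. -/
def LeftFracRel {R : Type*} [Mul R] [Zero R] (a b a' b' : R) : Prop :=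
  ∃ s s' : R, s ≠ 0 ∧ s * a = s' * a' ∧ s * b = s' * b'

namespace LeftFracRel

variable {R S : Type*}

theorem map [Mul R] [Zero R] [Mul S] [Zero S] {F : Type*} [FunLike F R S] [MulHomClass F R S]
    [ZeroHomClass F R S] (f : F) (hf : Function.Injective f) {a b a' b' : R}
    (h : LeftFracRel a b a' b') : LeftFracRel (f a) (f b) (f a') (f b') := by
  obtain ⟨s, s', hs, ha, hb⟩ := h
  exact ⟨f s, f s', (map_ne_zero_iff f hf).mpr hs, by simp only [← map_mul, ha],
    by simp only [← map_mul, hb]⟩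

theorem inv_mul_eq_inv_mul [DivisionRing R] {a b a' b' : R} (h : LeftFracRel a b a' b')
    (ha : a ≠ 0) : a⁻¹ * b = a'⁻¹ * b' := by
  obtain ⟨s, s', hs, hsa, hsb⟩ := h
  have hs' : s' ≠ 0 := left_ne_zero_of_mul (hsa ▸ mul_ne_zero hs ha)
  calc a⁻¹ * b = (s * a)⁻¹ * (s * b) := by rw [mul_inv_rev, mul_assoc, inv_mul_cancel_left₀ hs]
    _ = (s' * a')⁻¹ * (s' * b') := by rw [hsa, hsb]
    _ = a'⁻¹ * b' := by rw [mul_inv_rev, mul_assoc, inv_mul_cancel_left₀ hs']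

end LeftFracRel

theorem mul_eq_mul_of_inv_mul_eq_inv_mul {K : Type*} [DivisionRing K] {a b a' b' s s' : K}
    (ha : a ≠ 0) (ha' : a' ≠ 0) (h : a⁻¹ * b = a'⁻¹ * b') (hs : s * a = s' * a') :
    s * b = s' * b' := by
  rw [← mul_inv_cancel_left₀ ha b, ← mul_assoc, hs, mul_assoc, h, ← mul_assoc, mul_assoc s' a',
    mul_inv_cancel_left₀ ha']

namespace Polynomial

variable {R : Type*} [Semiring R]

theorem C_mem_center {z : R} (hz : z ∈ Set.center R) : C z ∈ Set.center R[X] :=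
  Semigroup.mem_center_iff.mpr fun p => Polynomial.ext fun n => by
    rw [coeff_mul_C, coeff_C_mul, Semigroup.mem_center_iff.mp hz]

theorem coeff_mul_natTrailingDegree (p q : R[X]) :
    (p * q).coeff p.natTrailingDegree = p.trailingCoeff * q.coeff 0 := by
  rw [coeff_mul]
  refine Finset.sum_eq_single (p.natTrailingDegree, 0) ?_ fun h => (h (by simp)).elim
  rintro ⟨i, j⟩ hij hne
  rw [Finset.HasAntidiagonal.mem_antidiagonal] at hij
  have hi : i < p.natTrailingDegree := by
    by_contra! hi
    exact hne (Prod.ext (by omega) (by omega))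
  rw [coeff_eq_zero_of_lt_natTrailingDegree hi, zero_mul]

end Polynomial

open Polynomial in
theorem LeftFracRel.coeff_zero {R : Type*} [Semiring R] [NoZeroDivisors R] {G H G' H' : R[X]}
    (h : LeftFracRel G H G' H') (hG : G.coeff 0 ≠ 0) (hG' : G'.coeff 0 ≠ 0) :
    LeftFracRel (G.coeff 0) (H.coeff 0) (G'.coeff 0) (H'.coeff 0) := by
  obtain ⟨U, U', hU, hUG, hUH⟩ := h
  have hG0 : G ≠ 0 := fun e => hG (by simp [e])
  have hG'0 : G' ≠ 0 := fun e => hG' (by simp [e])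
  have hU' : U' ≠ 0 := left_ne_zero_of_mul (hUG ▸ mul_ne_zero hU hG0)
  have hn : U.natTrailingDegree = U'.natTrailingDegree := by
    have := congrArg natTrailingDegree hUG
    rwa [natTrailingDegree_mul hU hG0, natTrailingDegree_mul hU' hG'0,
      natTrailingDegree_eq_zero.mpr (.inr hG), natTrailingDegree_eq_zero.mpr (.inr hG'),
      add_zero, add_zero] at this
  refine ⟨U.trailingCoeff, U'.trailingCoeff, mt trailingCoeff_eq_zero.mp hU, ?_, ?_⟩
  · rw [← coeff_mul_natTrailingDegree, hUG, hn, coeff_mul_natTrailingDegree]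
  · rw [← coeff_mul_natTrailingDegree, hUH, hn, coeff_mul_natTrailingDegree]

namespace AddMonoidAlgebra

variable {R S σ : Type*} [Semiring R] [Semiring S]

theorem ringHom_ext_of_X {f g : R[σ →₀ ℕ] →+* S} (hC : ∀ r, f (single 0 r) = g (single 0 r))
    (hX : ∀ μ, f (single (Finsupp.single μ 1) 1) = g (single (Finsupp.single μ 1) 1)) :
    f = g :=
  ringHom_ext' (RingHom.ext hC) (Finsupp.mulHom_ext' fun μ => MonoidHom.ext_mnat (hX μ))

theorem single_one_mem_center (m : σ →₀ ℕ) : single m (1 : R) ∈ Set.center R[σ →₀ ℕ] :=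
  Semigroup.mem_center_iff.mpr fun p =>
    (single_commute (fun _ => AddCommute.all _ _) Commute.one_left p).symm.eq

noncomputable def monomialCenterHom (x : σ → Submonoid.center S) :
    Multiplicative (σ →₀ ℕ) →* Submonoid.center S where
  toFun m := m.toAdd.prod fun μ k => x μ ^ k
  map_one' := Finsupp.prod_zero_index
  map_mul' _ _ := Finsupp.prod_add_index' (fun _ => pow_zero _) fun _ _ _ => pow_add _ _ _

noncomputable def evalCentral (f : R →+* S) (x : σ → Submonoid.center S) : R[σ →₀ ℕ] →+* S :=
  liftNCRingHom f ((Submonoid.center S).subtype.comp (monomialCenterHom x)) fun _ m =>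
    Submonoid.mem_center_iff.mp (monomialCenterHom x m).2 _

theorem evalCentral_single (f : R →+* S) (x : σ → Submonoid.center S) (m : σ →₀ ℕ) (r : R) :
    evalCentral f x (single m r) = f r * ↑(m.prod fun μ k => x μ ^ k) :=
  liftNCRingHom_single _ _ _ _ _

@[simp]
theorem evalCentral_C (f : R →+* S) (x : σ → Submonoid.center S) (r : R) :
    evalCentral f x (single 0 r) = f r := by
  simp [evalCentral_single]

@[simp]
theorem evalCentral_X (f : R →+* S) (x : σ → Submonoid.center S) (μ : σ) :
    evalCentral f x (single (Finsupp.single μ 1) 1) = x μ := by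
  simp [evalCentral_single]

end AddMonoidAlgebra

open AddMonoidAlgebra in
theorem LeftFracRel.of_single_zero {R M : Type*} [Semiring R] [AddMonoid M] {a b a' b' : R}
    (h : LeftFracRel (single (0 : M) a) (single 0 b) (single 0 a') (single 0 b')) :
    LeftFracRel a b a' b' := by
  obtain ⟨w, w', hw, ha, hb⟩ := h
  obtain ⟨m, hm⟩ : ∃ m, w.coeff m ≠ 0 := by
    by_contra! hw0
    exact hw (coeff_inj.mp (Finsupp.ext hw0))
  refine ⟨w.coeff m, w'.coeff m, hm, ?_, ?_⟩
  · simpa only [coeff_mul_single_zero] using congrArg (coeff · m) ha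
  · simpa only [coeff_mul_single_zero] using congrArg (coeff · m) hb

open AddMonoidAlgebra Polynomial

section EvalAt

variable {F A σ : Type*} [Field F] [Ring A] [Algebra F A]

noncomputable def evalAtHom (c : σ → F) : A[σ →₀ ℕ] →+* A :=
  evalCentral (RingHom.id A) fun μ =>
    (algebraMap F A : F →* A).codRestrict (Submonoid.center A)
      (fun r => Submonoid.mem_center_iff.mpr fun a => (Algebra.commutes r a).symm) (c μ)

theorem evalAtHom_single (c : σ → F) (m : σ →₀ ℕ) (a : A) :
    evalAtHom c (single m a) = (m.prod fun μ k => c μ ^ k) • a := by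
  rw [evalAtHom, evalCentral_single]
  simp_rw [← map_pow, ← map_finsuppProd]
  rw [Algebra.smul_def]
  exact (Algebra.commutes (R := F) _ a).symm

theorem evalAt_eq_evalAtHom {M : ℕ} (c : Fin M → F) (p : A[Fin M →₀ ℕ]) :
    evalAt c p = evalAtHom c p := by
  conv_rhs => rw [← sum_coeff_single p]
  rw [map_finsuppSum]
  exact Finsupp.sum_congr fun m _ => by rw [evalAtHom_single, Finsupp.prod_pow]

/-- `p ↦ p(c + t (x - c))`, with `t` the variable of `A[σ →₀ ℕ][X]`. -/
noncomputable def substLine (c : σ → F) : A[σ →₀ ℕ] →+* A[σ →₀ ℕ][X] :=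
  evalCentral (C.comp singleZeroRingHom) fun μ =>
    ⟨algebraMap F _ (c μ) + C (single (Finsupp.single μ 1) 1 - algebraMap F _ (c μ)) * X,
      (Subring.center _).add_mem (Set.algebraMap_mem_center _) ((Subring.center _).mul_mem
        (C_mem_center ((Subring.center _).sub_mem (single_one_mem_center _)
          (Set.algebraMap_mem_center _)))
        (Semigroup.mem_center_iff.mpr fun q => (commute_X q).symm.eq))⟩

theorem substLine_injective (c : σ → F) : Function.Injective (substLine (A := A) c) := by
  let evalOne := eval₂RingHom' (RingHom.id A[σ →₀ ℕ]) 1 fun _ => Commute.one_right _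
  have : evalOne.comp (substLine c) = RingHom.id _ :=
    ringHom_ext_of_X (fun r => by simp [evalOne, substLine]) fun μ => by simp [evalOne, substLine]
  exact Function.LeftInverse.injective (RingHom.congr_fun this)

theorem coeff_zero_substLine (c : σ → F) (p : A[σ →₀ ℕ]) :
    (substLine c p).coeff 0 = single 0 (evalAtHom c p) := by
  have : constantCoeff.comp (substLine c) = singleZeroRingHom.comp (evalAtHom (A := A) c) :=
    ringHom_ext_of_X (fun r => by simp [substLine, evalAtHom])
      fun μ => by simp [substLine, evalAtHom]
  exact RingHom.congr_fun this p

theorem LeftFracRel.evalAtHom [NoZeroDivisors A] {c : σ → F} {g h g' h' : A[σ →₀ ℕ]}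
    (hgh : LeftFracRel g h g' h') (hg : evalAtHom c g ≠ 0) (hg' : evalAtHom c g' ≠ 0) :
    LeftFracRel (evalAtHom c g) (evalAtHom c h) (evalAtHom c g') (evalAtHom c h') := by
  have hline := (hgh.map (substLine c) (substLine_injective c)).coeff_zero
    (by rwa [coeff_zero_substLine, Ne, single_eq_zero])
    (by rwa [coeff_zero_substLine, Ne, single_eq_zero])
  simp only [coeff_zero_substLine] at hline
  exact hline.of_single_zero

end EvalAt

theorem eval_of_fraction_well_defined_general {F A 𝒦 K : Type*} [Field F] [Ring A] [Algebra F A]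
    [NoZeroDivisors A] [DivisionRing 𝒦] [DivisionRing K] {M : ℕ}
    (hOreP : ∀ a b : AddMonoidAlgebra A (Fin M →₀ ℕ), a ≠ 0 → b ≠ 0 →
      (∃ x y : AddMonoidAlgebra A (Fin M →₀ ℕ), x * a = y * b ∧ x * a ≠ 0) ∧
      (∃ x y : AddMonoidAlgebra A (Fin M →₀ ℕ), a * x = b * y ∧ a * x ≠ 0))
    (ι : AddMonoidAlgebra A (Fin M →₀ ℕ) →+* 𝒦) (hι : Function.Injective ι)
    (κ : A →+* K) (hκ : Function.Injective κ)
    (g h g' h' : AddMonoidAlgebra A (Fin M →₀ ℕ)) (c : Fin M → F)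
    (hfrac : (ι g)⁻¹ * ι h = (ι g')⁻¹ * ι h')
    (hg : evalAt c g ≠ 0) (hg' : evalAt c g' ≠ 0) :
    (κ (evalAt c g))⁻¹ * κ (evalAt c h) = (κ (evalAt c g'))⁻¹ * κ (evalAt c h') := by
  simp only [evalAt_eq_evalAtHom] at hg hg' ⊢
  have hg0 : g ≠ 0 := by rintro rfl; exact hg (map_zero _)
  have hg'0 : g' ≠ 0 := by rintro rfl; exact hg' (map_zero _)
  obtain ⟨⟨u, u', hug, hu⟩, -⟩ := hOreP g g' hg0 hg'0
  have huh : u * h = u' * h' := hι <| by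
    simpa only [map_mul] using mul_eq_mul_of_inv_mul_eq_inv_mul ((map_ne_zero_iff ι hι).mpr hg0)
      ((map_ne_zero_iff ι hι).mpr hg'0) hfrac (by simp only [← map_mul, hug])
  have hgh : LeftFracRel g h g' h' := ⟨u, u', left_ne_zero_of_mul hu, hug, huh⟩
  exact ((hgh.evalAtHom hg hg').map κ hκ).inv_mul_eq_inv_mul ((map_ne_zero_iff κ hκ).mpr hg)

/-- Evaluation of noncommutative rational functions is well-defined: let `A` be an Ore
domain over `F`, `𝒜 = A[x_1,…,x_M]` (also an Ore domain), `𝒦 ⊇ 𝒜` and `K ⊇ A` the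
respective skew fields of fractions. If `g⁻¹h = g'⁻¹h'` in `𝒦` and `g(c) ≠ 0`,
`g'(c) ≠ 0`, then `g(c)⁻¹h(c) = g'(c)⁻¹h'(c)` in `K`. -/
theorem eval_of_fraction_well_defined {F A 𝒦 K : Type*} [Field F] [Ring A] [Algebra F A]
    [NoZeroDivisors A] [Nontrivial A] [DivisionRing 𝒦] [DivisionRing K] {M : ℕ}
    (hOreA : ∀ a b : A, a ≠ 0 → b ≠ 0 →
      (∃ x y : A, x * a = y * b ∧ x * a ≠ 0) ∧ (∃ x y : A, a * x = b * y ∧ a * x ≠ 0))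
    (hOreP : ∀ a b : AddMonoidAlgebra A (Fin M →₀ ℕ), a ≠ 0 → b ≠ 0 →
      (∃ x y : AddMonoidAlgebra A (Fin M →₀ ℕ), x * a = y * b ∧ x * a ≠ 0) ∧
      (∃ x y : AddMonoidAlgebra A (Fin M →₀ ℕ), a * x = b * y ∧ a * x ≠ 0))
    (ι : AddMonoidAlgebra A (Fin M →₀ ℕ) →+* 𝒦) (hι : Function.Injective ι)
    (κ : A →+* K) (hκ : Function.Injective κ)
    (g h g' h' : AddMonoidAlgebra A (Fin M →₀ ℕ)) (c : Fin M → F)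
    (hfrac : (ι g)⁻¹ * ι h = (ι g')⁻¹ * ι h')
    (hg : evalAt c g ≠ 0) (hg' : evalAt c g' ≠ 0) :
    (κ (evalAt c g))⁻¹ * κ (evalAt c h) = (κ (evalAt c g'))⁻¹ * κ (evalAt c h') :=
  eval_of_fraction_well_defined_general hOreP ι hι κ hκ g h g' h' c hfrac hg hg'
end
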